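/- Let G be a locally compact group and H a closed normal subgroup of G. Then min{c_ub(G/H), c_ub(H)} ≤ c_ub(G) ≤ c_ub(G/H), where H carries the subspace topology and G/H the quotient topology. -/

import Mathlib

open scoped ENNReal
open MeasureTheory

structure HilbRep (G : Type*) [Group G] [TopologicalSpace G] where
  (space : Type*)
  [normedAddCommGroup : NormedAddCommGroup space]
  [innerProductSpace : InnerProductSpace ℂ space]
  [completeSpace : CompleteSpace space]
  toFun : G →* (space →L[ℂ] space)ˣ

attribute [instance] HilbRep.normedAddCommGroup HilbRep.innerProductSpace HilbRep.completeSpace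

namespace HilbRep

variable {G : Type*} [Group G] [TopologicalSpace G]

/-- The bounded invertible operator associated to a group element. -/
def op (π : HilbRep G) (s : G) : π.space →L[ℂ] π.space :=
  (π.toFun s : π.space →L[ℂ] π.space)

/-- The representation is uniformly bounded by `c`. -/
def IsUB (π : HilbRep G) (c : ℝ) : Prop := ∀ s : G, ‖π.op s‖ ≤ c

/-- The representation is continuous for the strong operator topology. -/
def IsSOTContinuous (π : HilbRep G) : Prop :=
  ∀ ξ : π.space, Continuous fun s : G => π.op s ξ

/-- `π ∈ R_c(G)`: strongly continuous and uniformly bounded by `c`. -/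
def IsRc (π : HilbRep G) (c : ℝ) : Prop := π.IsUB c ∧ π.IsSOTContinuous

/-- `π` almost has invariant vectors. -/
def AlmostInvariantVectors (π : HilbRep G) : Prop :=
  ∀ Q : Set G, IsCompact Q → ∀ ε : ℝ, 0 < ε →
    ∃ ξ : π.space, ∀ s ∈ Q, ‖π.op s ξ - ξ‖ < ε * ‖ξ‖

/-- `π` has a nonzero invariant vector. -/
def HasInvariantVector (π : HilbRep G) : Prop :=
  ∃ ξ : π.space, ξ ≠ 0 ∧ ∀ s : G, π.op s ξ = ξ

end HilbRep

universe u v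

/-- Property (T)_c. -/
def HasPropertyT (G : Type u) [Group G] [TopologicalSpace G] (c : ℝ) : Prop :=
  ∀ π : HilbRep.{u, v} G, π.IsRc c → π.AlmostInvariantVectors → π.HasInvariantVector

open Classical in
/-- The constant `c_ub(G) ∈ [1, ∞]`. -/
noncomputable def cUB (G : Type u) [Group G] [TopologicalSpace G] : ℝ≥0∞ :=
  if HasPropertyT.{u, v} G 1 then
    ⨆ (c : ℝ) (_ : 1 ≤ c ∧ HasPropertyT.{u, v} G c), ENNReal.ofReal c
  else 1

/-!
The upper bound holds because every representation of `G ⧸ H` pulls back to `G`.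

For the lower bound, let `π ∈ R_c(G)` almost have invariant vectors and let `V` be the space of
`H`-fixed vectors, which is closed and, `H` being normal, `G`-invariant. Compressing `π|_H` to
`Vᗮ` gives a representation in `R_c(H)` without invariant vectors: if the compression fixes `w`,
then `d = π(h)w - w` is `H`-fixed, so `π(hⁿ)w = w + n • d` and uniform boundedness forces `d = 0`.
By Property (T)_c for `H` the compression has a spectral gap, so a sufficiently invariant `ξ` has
a small component in `Vᗮ`, and its component in `V` is almost invariant for the representation
of `G ⧸ H` on `V` (compact subsets of `G ⧸ H` lift to `G` by local compactness). Property (T)_c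
for `G ⧸ H` then gives a nonzero invariant vector in `V`.
-/

theorem IsCompact.exists_isCompact_subset_image {X Y : Type*} [TopologicalSpace X]
    [TopologicalSpace Y] [LocallyCompactSpace X] {f : X → Y} (hf : IsOpenMap f)
    (hsurj : Function.Surjective f) {K : Set Y} (hK : IsCompact K) :
    ∃ Q : Set X, IsCompact Q ∧ K ⊆ f '' Q := by
  choose g hg using hsurj
  choose C hC hCx using fun x : X => exists_compact_mem_nhds x
  obtain ⟨t, -, hKt⟩ := hK.elim_nhds_subcover (fun y => f '' C (g y))
    fun y _ => by simpa only [hg y] using hf.image_mem_nhds (hCx (g y))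
  refine ⟨⋃ y ∈ t, C (g y), t.finite_toSet.isCompact_biUnion fun y _ => hC _, ?_⟩
  rwa [Set.image_iUnion₂]

theorem ContinuousLinearMap.apply_eq_self_of_bounded_orbit {𝕜 E : Type*} [RCLike 𝕜]
    [NormedAddCommGroup E] [NormedSpace 𝕜 E] {T : E →L[𝕜] E} {x : E}
    (hfix : T (T x - x) = T x - x) (hbdd : ∃ C, ∀ n : ℕ, ‖(T ^ n) x‖ ≤ C) : T x = x := by
  have horbit : ∀ n : ℕ, (T ^ n) x = x + n • (T x - x) := by
    intro n
    induction n with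
    | zero => simp
    | succ n ih =>
      rw [pow_succ', mul_apply_eq_comp, ih, map_add, map_nsmul, hfix, succ_nsmul]
      abel
  obtain ⟨C, hC⟩ := hbdd
  by_contra hne
  have hd : 0 < ‖T x - x‖ := norm_pos_iff.2 (sub_ne_zero.2 hne)
  obtain ⟨n, hn⟩ := exists_nat_gt ((C + ‖x‖) / ‖T x - x‖)
  have : (n : ℝ) * ‖T x - x‖ ≤ C + ‖x‖ :=
    calc (n : ℝ) * ‖T x - x‖ = ‖n • (T x - x)‖ := by rw [RCLike.norm_nsmul 𝕜, nsmul_eq_mul]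
    _ = ‖(T ^ n) x - x‖ := by rw [horbit, add_sub_cancel_left]
    _ ≤ C + ‖x‖ := (norm_sub_le _ _).trans (by linarith [hC n])
  linarith [(div_lt_iff₀ hd).1 hn]

namespace HilbRep

section Basic

variable {G : Type*} [Group G] [TopologicalSpace G] (π : HilbRep G)

@[simp] theorem op_one : π.op 1 = 1 := by simp [op]

theorem op_mul_apply (s t : G) (x : π.space) : π.op (s * t) x = π.op s (π.op t x) := by
  simp [op]

theorem op_pow (s : G) (n : ℕ) : π.op (s ^ n) = π.op s ^ n := by simp [op]

variable {π} {c : ℝ}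

theorem IsUB.nonneg (h : π.IsUB c) : 0 ≤ c := (norm_nonneg _).trans (h 1)

theorem IsUB.norm_op_apply_le (h : π.IsUB c) (s : G) (x : π.space) : ‖π.op s x‖ ≤ c * ‖x‖ :=
  (π.op s).le_of_opNorm_le (h s) x

end Basic

section Comap

variable {G K : Type*} [Group G] [TopologicalSpace G] [Group K] [TopologicalSpace K]

abbrev comap (π : HilbRep K) (f : G →* K) : HilbRep G where
  space := π.space
  toFun := π.toFun.comp f

variable {π : HilbRep K} {f : G →* K} {c : ℝ}

theorem IsRc.comap (h : π.IsRc c) (hf : Continuous f) : (π.comap f).IsRc c :=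
  ⟨fun s => h.1 (f s), fun x => (h.2 x).comp hf⟩

theorem AlmostInvariantVectors.comap (h : π.AlmostInvariantVectors) (hf : Continuous f) :
    (π.comap f).AlmostInvariantVectors := by
  intro Q hQ ε hε
  obtain ⟨x, hx⟩ := h (f '' Q) (hQ.image hf) ε hε
  exact ⟨x, fun s hs => hx (f s) (Set.mem_image_of_mem f hs)⟩

theorem HasInvariantVector.of_comap (h : (π.comap f).HasInvariantVector)
    (hf : Function.Surjective f) : π.HasInvariantVector := by
  obtain ⟨x, hx0, hx⟩ := h
  refine ⟨x, hx0, fun t => ?_⟩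
  obtain ⟨s, rfl⟩ := hf t
  exact hx s

end Comap

section Restrict

variable {G : Type*} [Group G] [TopologicalSpace G] (π : HilbRep G)
  (V : Submodule ℂ π.space) [CompleteSpace V] (hV : ∀ s, ∀ x ∈ V, π.op s x ∈ V)

noncomputable abbrev restrict : HilbRep G where
  space := V
  toFun := MonoidHom.toHomUnits
    { toFun := fun s => (π.op s).restrict (hV s)
      map_one' := by ext; simp
      map_mul' := fun s t => by ext; simp [op_mul_apply] }

variable {π V hV} {c : ℝ}

theorem IsRc.restrict (h : π.IsRc c) : (π.restrict V hV).IsRc c :=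
  ⟨fun s => ContinuousLinearMap.opNorm_le_bound _ h.1.nonneg fun x => h.1.norm_op_apply_le s x,
    fun x => (h.2 x).subtype_mk _⟩

theorem HasInvariantVector.of_restrict (h : (π.restrict V hV).HasInvariantVector) :
    π.HasInvariantVector := by
  obtain ⟨x, hx0, hx⟩ := h
  exact ⟨x, by simpa using hx0, fun s => congrArg Subtype.val (hx s)⟩

end Restrict

section QuotientLift

variable {G : Type*} [Group G] [TopologicalSpace G] (π : HilbRep G) (H : Subgroup G) [H.Normal]
  (hH : ∀ h ∈ H, π.op h = 1)

def quotientLift : HilbRep (G ⧸ H) where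
  space := π.space
  toFun := QuotientGroup.lift H π.toFun fun h hh => Units.ext (hH h hh)

variable {π H hH} {c : ℝ}

theorem IsRc.quotientLift (h : π.IsRc c) : (π.quotientLift H hH).IsRc c :=
  ⟨fun t => QuotientGroup.induction_on t h.1,
    fun x => (QuotientGroup.isQuotientMap_mk H).continuous_iff.2 (h.2 x)⟩

theorem AlmostInvariantVectors.quotientLift [IsTopologicalGroup G] [LocallyCompactSpace G]
    (h : π.AlmostInvariantVectors) : (π.quotientLift H hH).AlmostInvariantVectors := by
  intro K hK ε hε
  obtain ⟨Q, hQ, hKQ⟩ :=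
    hK.exists_isCompact_subset_image QuotientGroup.isOpenMap_coe QuotientGroup.mk_surjective
  obtain ⟨x, hx⟩ := h Q hQ ε hε
  refine ⟨x, fun t ht => ?_⟩
  obtain ⟨s, hs, rfl⟩ := hKQ ht
  exact hx s hs

theorem HasInvariantVector.of_quotientLift (h : (π.quotientLift H hH).HasInvariantVector) :
    π.HasInvariantVector := by
  obtain ⟨x, hx0, hx⟩ := h
  exact ⟨x, hx0, fun s => hx s⟩

end QuotientLift

section Fixed

variable {G : Type*} [Group G] [TopologicalSpace G] (π : HilbRep G)

def fixedSubspace : Submodule ℂ π.space where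
  carrier := {x | ∀ s, π.op s x = x}
  add_mem' hx hy s := by simp [hx s, hy s]
  zero_mem' _ := map_zero _
  smul_mem' a x hx s := by simp [hx s]

theorem mem_fixedSubspace {x : π.space} : x ∈ π.fixedSubspace ↔ ∀ s, π.op s x = x := Iff.rfl

theorem isClosed_fixedSubspace : IsClosed (π.fixedSubspace : Set π.space) := by
  have : (π.fixedSubspace : Set π.space) = ⋂ s, {x | π.op s x = x} := by
    ext; simp [mem_fixedSubspace]
  rw [this]
  exact isClosed_iInter fun s => isClosed_eq (π.op s).continuous continuous_id

theorem op_mem_fixedSubspace (s : G) {x : π.space} (hx : x ∈ π.fixedSubspace) :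
    π.op s x ∈ π.fixedSubspace := by
  rwa [hx s]

instance : CompleteSpace π.fixedSubspace := π.isClosed_fixedSubspace.completeSpace_coe

theorem op_mem_fixedSubspace_comap_subtype (H : Subgroup G) [H.Normal] (s : G) {x : π.space}
    (hx : x ∈ (π.comap H.subtype).fixedSubspace) :
    π.op s x ∈ (π.comap H.subtype).fixedSubspace := by
  rintro ⟨h, hh⟩
  have hconj : s⁻¹ * h * s ∈ H := by simpa using Subgroup.Normal.conj_mem ‹_› h hh s⁻¹
  calc π.op h (π.op s x) = π.op s (π.op (s⁻¹ * h * s) x) := by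
        rw [← op_mul_apply, ← op_mul_apply]; group
  _ = π.op s x := congrArg (π.op s) (hx ⟨_, hconj⟩)

end Fixed

section Compression

variable {G : Type*} [Group G] [TopologicalSpace G] (π : HilbRep G) (V : Submodule ℂ π.space)
  [V.HasOrthogonalProjection]

theorem starProjection_orthogonal_op_starProjection {s : G} (hVs : ∀ x ∈ V, π.op s x ∈ V)
    (x : π.space) :
    Vᗮ.starProjection (π.op s (Vᗮ.starProjection x)) = Vᗮ.starProjection (π.op s x) := by
  rw [Submodule.starProjection_orthogonal_val x, map_sub, map_sub,
    Submodule.starProjection_orthogonal_apply_eq_zero (hVs _ (V.starProjection_apply_mem x)),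
    sub_zero]

noncomputable abbrev compression (hV : ∀ s, ∀ x ∈ V, π.op s x ∈ V) : HilbRep G where
  space := Vᗮ
  toFun := MonoidHom.toHomUnits
    { toFun := fun s => Vᗮ.orthogonalProjectionOnto ∘L π.op s ∘L Vᗮ.subtypeL
      map_one' := by ext; simp
      map_mul' := fun s t => by
        ext w
        change Vᗮ.starProjection (π.op (s * t) w) =
          Vᗮ.starProjection (π.op s (Vᗮ.starProjection (π.op t w)))
        rw [starProjection_orthogonal_op_starProjection π V (hV s), op_mul_apply] }

variable (hV : ∀ s, ∀ x ∈ V, π.op s x ∈ V)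

theorem coe_compression_op_apply (s : G) (w : Vᗮ) :
    ((π.compression V hV).op s w : π.space) = Vᗮ.starProjection (π.op s w) := rfl

variable {π V hV} {c : ℝ}

theorem IsRc.compression (h : π.IsRc c) : (π.compression V hV).IsRc c :=
  ⟨fun s => ContinuousLinearMap.opNorm_le_bound _ h.1.nonneg fun w =>
      (Vᗮ.norm_orthogonalProjectionOnto_apply_le _).trans (h.1.norm_op_apply_le s w),
    fun w => Vᗮ.orthogonalProjectionOnto.continuous.comp (h.2 w)⟩

theorem not_hasInvariantVector_compression_fixedSubspace (hUB : π.IsUB c) :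
    ¬ (π.compression π.fixedSubspace fun s _ => π.op_mem_fixedSubspace s).HasInvariantVector := by
  rintro ⟨w, hw0, hw⟩
  have hdiff : ∀ s, π.op s w - w ∈ π.fixedSubspace := fun s => by
    have := Submodule.sub_starProjection_mem_orthogonal (K := π.fixedSubspaceᗮ) (π.op s w)
    rwa [← coe_compression_op_apply π _ fun s _ => π.op_mem_fixedSubspace s, hw s,
      Submodule.orthogonal_orthogonal] at this
  have hwfix : (w : π.space) ∈ π.fixedSubspace := fun s =>
    ContinuousLinearMap.apply_eq_self_of_bounded_orbit (hdiff s s)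
      ⟨c * ‖w‖, fun n => op_pow π s n ▸ hUB.norm_op_apply_le _ _⟩
  exact hw0 <| Subtype.ext <|
    Submodule.disjoint_def.1 π.fixedSubspace.orthogonal_disjoint _ hwfix w.2

end Compression

section SpectralGap

variable {G K : Type*} [Group G] [TopologicalSpace G] [Group K] [TopologicalSpace K]
  {π : HilbRep G} {V : Submodule ℂ π.space} {c : ℝ}

theorem norm_compression_op_sub_le [V.HasOrthogonalProjection]
    (hV : ∀ s, ∀ x ∈ V, π.op s x ∈ V) (s : G) (x : π.space) :
    ‖(π.compression V hV).op s (Vᗮ.orthogonalProjectionOnto x) - Vᗮ.orthogonalProjectionOnto x‖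
      ≤ ‖π.op s x - x‖ := by
  have : ((π.compression V hV).op s (Vᗮ.orthogonalProjectionOnto x) : π.space) -
      Vᗮ.orthogonalProjectionOnto x = Vᗮ.starProjection (π.op s x - x) := by
    rw [coe_compression_op_apply, Submodule.coe_orthogonalProjectionOnto_apply,
      starProjection_orthogonal_op_starProjection π V (hV s), map_sub]
  calc _ = ‖Vᗮ.starProjection (π.op s x - x)‖ := by rw [← this]; rfl
  _ ≤ _ := Vᗮ.norm_starProjection_apply_le _

theorem IsUB.norm_op_starProjection_sub_le (hUB : π.IsUB c) [V.HasOrthogonalProjection]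
    (s : G) (ξ : π.space) :
    ‖π.op s (V.starProjection ξ) - V.starProjection ξ‖ ≤
      ‖π.op s ξ - ξ‖ + (c + 1) * ‖Vᗮ.starProjection ξ‖ := by
  set w := Vᗮ.starProjection ξ
  have hξ : V.starProjection ξ = ξ - w :=
    eq_sub_of_add_eq (V.starProjection_add_starProjection_orthogonal ξ)
  calc ‖π.op s (V.starProjection ξ) - V.starProjection ξ‖
      = ‖(π.op s ξ - ξ) - (π.op s w - w)‖ := by rw [hξ, map_sub]; abel_nf
  _ ≤ ‖π.op s ξ - ξ‖ + (‖π.op s w‖ + ‖w‖) :=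
      (norm_sub_le _ _).trans (add_le_add_right (norm_sub_le _ _) _)
  _ ≤ ‖π.op s ξ - ξ‖ + (c + 1) * ‖w‖ := by linarith [hUB.norm_op_apply_le s w]

theorem AlmostInvariantVectors.restrict_of_not_compression [CompleteSpace V]
    {hV : ∀ s, ∀ x ∈ V, π.op s x ∈ V} (hUB : π.IsUB c) (hπ : π.AlmostInvariantVectors)
    {f : K →* G} (hf : Continuous f)
    (hgap : ¬ ((π.comap f).compression V fun k => hV (f k)).AlmostInvariantVectors) :
    (π.restrict V hV).AlmostInvariantVectors := by
  simp only [AlmostInvariantVectors, not_forall, not_exists, not_lt] at hgap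
  obtain ⟨Q₀, hQ₀, ε₀, hε₀, hgap⟩ := hgap
  intro Q hQ ε hε
  have hc := hUB.nonneg
  -- `δ ≤ ε₀ / 2` keeps the `Vᗮ`-component of `ξ` below `‖ξ‖ / 2`; the second bound absorbs
  -- the error `δ (ε₀ + c + 1) ‖ξ‖` of its `V`-component.
  set δ := min (ε₀ / 2) (ε * ε₀ / (2 * (ε₀ + c + 1)))
  have hδ₁ : δ ≤ ε₀ / 2 := min_le_left _ _
  have hδ₂ : δ * (2 * (ε₀ + c + 1)) ≤ ε * ε₀ :=
    (le_div_iff₀ (by positivity)).1 (min_le_right _ _)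
  have hδ : 0 < δ := lt_min (by positivity) (by positivity)
  obtain ⟨ξ, hξ⟩ := hπ (Q ∪ f '' Q₀ ∪ {1})
    ((hQ.union (hQ₀.image hf)).union isCompact_singleton) δ hδ
  have hξ0 : 0 < ‖ξ‖ := by
    have := hξ 1 (Or.inr rfl)
    rw [op_one, one_apply_eq_self, sub_self, norm_zero] at this
    exact pos_of_mul_pos_right this hδ.le
  have hw : ε₀ * ‖Vᗮ.starProjection ξ‖ < δ * ‖ξ‖ := by
    obtain ⟨k, hk, hkw⟩ := hgap (Vᗮ.orthogonalProjectionOnto ξ)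
    exact hkw.trans_lt ((norm_compression_op_sub_le (π := π.comap f) _ k ξ).trans_lt
      (hξ (f k) (Or.inl (Or.inr (Set.mem_image_of_mem f hk)))))
  have hx : ‖ξ‖ / 2 < ‖V.starProjection ξ‖ := by
    have hsplit := norm_add_le (V.starProjection ξ) (Vᗮ.starProjection ξ)
    rw [V.starProjection_add_starProjection_orthogonal] at hsplit
    have : ε₀ * ‖Vᗮ.starProjection ξ‖ < ε₀ * (‖ξ‖ / 2) := by nlinarith
    linarith [lt_of_mul_lt_mul_left this hε₀.le]
  refine ⟨V.orthogonalProjectionOnto ξ, fun q hq => ?_⟩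
  change ‖π.op q (V.starProjection ξ) - V.starProjection ξ‖ < ε * ‖V.starProjection ξ‖
  refine lt_of_mul_lt_mul_left ?_ hε₀.le
  calc ε₀ * ‖π.op q (V.starProjection ξ) - V.starProjection ξ‖
      ≤ ε₀ * (δ * ‖ξ‖ + (c + 1) * ‖Vᗮ.starProjection ξ‖) := by
        gcongr
        exact (hUB.norm_op_starProjection_sub_le q ξ).trans
          (by linarith [hξ q (Or.inl (Or.inl hq))])
  _ ≤ δ * (2 * (ε₀ + c + 1)) * (‖ξ‖ / 2) := by nlinarith
  _ ≤ ε * ε₀ * (‖ξ‖ / 2) := by gcongr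
  _ < ε * ε₀ * ‖V.starProjection ξ‖ := by gcongr
  _ = ε₀ * (ε * ‖V.starProjection ξ‖) := by ring

end SpectralGap

end HilbRep

section PropertyT

variable {G : Type u} [Group G] [TopologicalSpace G] {c : ℝ}

theorem HasPropertyT.of_le {c' : ℝ} (h : HasPropertyT.{u, v} G c) (hc : c' ≤ c) :
    HasPropertyT.{u, v} G c' :=
  fun π hπ => h π ⟨fun s => (hπ.1 s).trans hc, hπ.2⟩

theorem HasPropertyT.of_surjective {K : Type*} [Group K] [TopologicalSpace K]
    (h : HasPropertyT.{u, v} G c) {f : G →* K} (hf : Continuous f)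
    (hsurj : Function.Surjective f) : HasPropertyT.{_, v} K c :=
  fun π hπ hAIV => (h (π.comap f) (hπ.comap hf) (hAIV.comap hf)).of_comap hsurj

theorem HasPropertyT.of_quotient_of_subgroup [IsTopologicalGroup G] [LocallyCompactSpace G]
    {H : Subgroup G} [H.Normal] (hQ : HasPropertyT.{u, v} (G ⧸ H) c)
    (hH : HasPropertyT.{u, v} H c) : HasPropertyT.{u, v} G c := by
  intro π hπ hAIV
  let V := (π.comap H.subtype).fixedSubspace
  have : CompleteSpace V := inferInstanceAs (CompleteSpace (π.comap H.subtype).fixedSubspace)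
  have hV : ∀ s, ∀ x ∈ V, π.op s x ∈ V := fun s _ => π.op_mem_fixedSubspace_comap_subtype H s
  have hπH := hπ.comap (f := H.subtype) continuous_subtype_val
  have hgap : ¬ ((π.comap H.subtype).compression V fun h => hV h).AlmostInvariantVectors :=
    fun h => HilbRep.not_hasInvariantVector_compression_fixedSubspace hπH.1
      (hH _ hπH.compression h)
  have hHfix : ∀ h ∈ H, (π.restrict V hV).op h = 1 := fun h hh => by
    ext x
    exact x.2 ⟨h, hh⟩
  exact (hQ _ (hπ.restrict.quotientLift (hH := hHfix))
    ((hAIV.restrict_of_not_compression hπ.1 continuous_subtype_val hgap).quotientLift)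
    ).of_quotientLift.of_restrict

end PropertyT

section CUB

variable {G : Type u} [Group G] [TopologicalSpace G]

theorem one_le_cUB : 1 ≤ cUB.{u, v} G := by
  unfold cUB
  split_ifs with h
  · exact le_iSup₂_of_le 1 ⟨le_rfl, h⟩ ENNReal.ofReal_one.ge
  · exact le_rfl

theorem lt_cUB_iff {a : ℝ≥0∞} (ha : 1 ≤ a) :
    a < cUB.{u, v} G ↔ ∃ c, HasPropertyT.{u, v} G c ∧ a < ENNReal.ofReal c := by
  constructor
  · intro h
    unfold cUB at h
    split_ifs at h
    · obtain ⟨c, hc⟩ := lt_iSup_iff.1 h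
      obtain ⟨⟨-, hT⟩, hac⟩ := lt_iSup_iff.1 hc
      exact ⟨c, hT, hac⟩
    · exact absurd (ha.trans_lt h) (lt_irrefl 1)
  · rintro ⟨c, hT, hac⟩
    have hc : 1 < c := ENNReal.one_lt_ofReal.1 (ha.trans_lt hac)
    unfold cUB
    rw [if_pos (hT.of_le hc.le)]
    exact hac.trans_le (le_iSup₂_of_le c ⟨hc.le, hT⟩ le_rfl)

theorem min_cUB_le_cUB {K₁ K₂ : Type*} [Group K₁] [TopologicalSpace K₁] [Group K₂]
    [TopologicalSpace K₂]
    (h : ∀ c, HasPropertyT.{_, v} K₁ c → HasPropertyT.{_, v} K₂ c → HasPropertyT.{u, v} G c) :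
    min (cUB.{_, v} K₁) (cUB.{_, v} K₂) ≤ cUB.{u, v} G := by
  refine le_of_forall_lt fun a ha => ?_
  rcases lt_or_ge a 1 with ha1 | ha1
  · exact ha1.trans_le one_le_cUB
  obtain ⟨c₁, hT₁, ha₁⟩ := (lt_cUB_iff ha1).1 (lt_min_iff.1 ha).1
  obtain ⟨c₂, hT₂, ha₂⟩ := (lt_cUB_iff ha1).1 (lt_min_iff.1 ha).2
  refine (lt_cUB_iff ha1).2 ⟨min c₁ c₂, h _ (hT₁.of_le (min_le_left _ _))
    (hT₂.of_le (min_le_right _ _)), ?_⟩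
  rw [ENNReal.ofReal_min]
  exact lt_min ha₁ ha₂

theorem cUB_le_cUB {K : Type*} [Group K] [TopologicalSpace K]
    (h : ∀ c, HasPropertyT.{u, v} G c → HasPropertyT.{_, v} K c) :
    cUB.{u, v} G ≤ cUB.{_, v} K := by
  simpa using min_cUB_le_cUB (K₁ := G) (K₂ := G) fun c hc _ => h c hc

end CUB

theorem cUB_quotient_sandwich_general {G : Type u} [Group G] [TopologicalSpace G] [IsTopologicalGroup G]
    [LocallyCompactSpace G] (H : Subgroup G) [H.Normal] :
    min (cUB.{u, v} (G ⧸ H)) (cUB.{u, v} ↥H) ≤ cUB.{u, v} G ∧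
      cUB.{u, v} G ≤ cUB.{u, v} (G ⧸ H) :=
  ⟨min_cUB_le_cUB fun _ hQ hH => hQ.of_quotient_of_subgroup hH,
    cUB_le_cUB fun _ hG =>
      hG.of_surjective QuotientGroup.continuous_mk (QuotientGroup.mk'_surjective H)⟩

theorem cUB_quotient_sandwich {G : Type u} [Group G] [TopologicalSpace G] [IsTopologicalGroup G]
    [LocallyCompactSpace G] (H : Subgroup G) [H.Normal] (hH : IsClosed (H : Set G)) :
    min (cUB.{u, v} (G ⧸ H)) (cUB.{u, v} ↥H) ≤ cUB.{u, v} G ∧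
      cUB.{u, v} G ≤ cUB.{u, v} (G ⧸ H) :=
  cUB_quotient_sandwich_general H
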